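/- For partitions λ of length n and μ of length k, the shuffle sum ∑_{{i_1,...,i_n}} M_λ(x_{i_1},...,x_{i_n}) · M_μ(x_{j_1},...,x_{j_k}) equals M_{(λ,μ)_≤}(x_1,...,x_{n+k}), where the sum is over all n-element subsets {i_1,...,i_n} of {1,...,n+k} with complement {j_1,...,j_k}, and (λ,μ)_≤ is the weakly increasing rearrangement of the concatenation of λ and μ. -/
import Mathlib


open MvPolynomial Finset

noncomputable section

/-- `M_λ(x_1,…,x_n) = ∑_{σ ∈ S_n} x_{σ(1)}^{λ_1} ⋯ x_{σ(n)}^{λ_n}`. -/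
def Msym {n : ℕ} (lam : Fin n → ℕ) : MvPolynomial (Fin n) ℚ :=
  ∑ σ : Equiv.Perm (Fin n), ∏ i : Fin n, X (σ i) ^ lam i

/-- `S_μ`, the set of distinct rearrangements of the parts of `μ`. -/
def rearr {n : ℕ} (mu : Fin n → ℕ) : Finset (Fin n → ℕ) :=
  (Finset.univ : Finset (Equiv.Perm (Fin n))).image (fun σ : Equiv.Perm (Fin n) => mu ∘ ⇑σ)

/-- The monomial symmetric polynomial `m_μ`: the sum of the distinct monomials
obtained by permuting the exponent vector `μ`. -/
def msym {n : ℕ} (mu : Fin n → ℕ) : MvPolynomial (Fin n) ℚ :=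
  ∑ w ∈ rearr mu, ∏ i : Fin n, X i ^ w i

/-- `c(λ)`, the number of permutations stabilizing the vector `λ`. -/
def cstab {n : ℕ} (lam : Fin n → ℕ) : ℕ :=
  ((Finset.univ : Finset (Equiv.Perm (Fin n))).filter (fun σ : Equiv.Perm (Fin n) => lam ∘ ⇑σ = lam)).card

end

open MvPolynomial

lemma Msym_comp_perm {n : ℕ} (lam : Fin n → ℕ) (π : Equiv.Perm (Fin n)) :
    Msym (lam ∘ ⇑π) = Msym lam := by
  unfold Msym
  refine Fintype.sum_bijective (· * π⁻¹) (Group.mulRight_bijective π⁻¹) _ _ fun σ => ?_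
  rw [← Equiv.prod_comp π fun j => X ((σ * π⁻¹) j) ^ lam j]
  simp [Equiv.Perm.mul_apply, Function.comp]

def shuffleFun {n k : ℕ} (I : Finset (Fin (n+k))) (hI : I.card = n) (hJ : Iᶜ.card = k)
    (τ : Equiv.Perm (Fin n)) (ρ : Equiv.Perm (Fin k)) : Fin (n+k) → Fin (n+k) :=
  Fin.append (⇑(I.orderEmbOfFin hI) ∘ ⇑τ) (⇑(Iᶜ.orderEmbOfFin hJ) ∘ ⇑ρ)

lemma shuffleFun_castAdd {n k : ℕ} (I : Finset (Fin (n+k))) (hI : I.card = n) (hJ : Iᶜ.card = k)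
    (τ : Equiv.Perm (Fin n)) (ρ : Equiv.Perm (Fin k)) (i : Fin n) :
    shuffleFun I hI hJ τ ρ (Fin.castAdd k i) = I.orderEmbOfFin hI (τ i) := by
  simp [shuffleFun, Fin.append_left]

lemma shuffleFun_natAdd {n k : ℕ} (I : Finset (Fin (n+k))) (hI : I.card = n) (hJ : Iᶜ.card = k)
    (τ : Equiv.Perm (Fin n)) (ρ : Equiv.Perm (Fin k)) (j : Fin k) :
    shuffleFun I hI hJ τ ρ (Fin.natAdd n j) = Iᶜ.orderEmbOfFin hJ (ρ j) := by
  simp [shuffleFun, Fin.append_right]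

lemma shuffleFun_injective {n k : ℕ} (I : Finset (Fin (n+k))) (hI : I.card = n) (hJ : Iᶜ.card = k)
    (τ : Equiv.Perm (Fin n)) (ρ : Equiv.Perm (Fin k)) :
    Function.Injective (shuffleFun I hI hJ τ ρ) := by
  intro a b hab
  induction a using Fin.addCases with
  | left i =>
    induction b using Fin.addCases with
    | left j =>
      rw [shuffleFun_castAdd, shuffleFun_castAdd] at hab
      rw [τ.injective ((I.orderEmbOfFin hI).injective hab)]
    | right j =>
      exfalso
      rw [shuffleFun_castAdd, shuffleFun_natAdd] at hab
      have h1 : I.orderEmbOfFin hI (τ i) ∈ I := I.orderEmbOfFin_mem hI _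
      have h2 : Iᶜ.orderEmbOfFin hJ (ρ j) ∈ Iᶜ := Iᶜ.orderEmbOfFin_mem hJ _
      rw [hab] at h1
      exact (Finset.mem_compl.mp h2) h1
  | right i =>
    induction b using Fin.addCases with
    | left j =>
      exfalso
      rw [shuffleFun_natAdd, shuffleFun_castAdd] at hab
      have h1 : I.orderEmbOfFin hI (τ j) ∈ I := I.orderEmbOfFin_mem hI _
      have h2 : Iᶜ.orderEmbOfFin hJ (ρ i) ∈ Iᶜ := Iᶜ.orderEmbOfFin_mem hJ _
      rw [← hab] at h1
      exact (Finset.mem_compl.mp h2) h1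
    | right j =>
      rw [shuffleFun_natAdd, shuffleFun_natAdd] at hab
      rw [ρ.injective ((Iᶜ.orderEmbOfFin hJ).injective hab)]

noncomputable def shufflePerm {n k : ℕ} (I : Finset (Fin (n+k))) (hI : I.card = n) (hJ : Iᶜ.card = k)
    (τ : Equiv.Perm (Fin n)) (ρ : Equiv.Perm (Fin k)) : Equiv.Perm (Fin (n+k)) :=
  Equiv.ofBijective _ (Finite.injective_iff_bijective.mp (shuffleFun_injective I hI hJ τ ρ))

lemma shufflePerm_image {n k : ℕ} (I : Finset (Fin (n+k))) (hI : I.card = n) (hJ : Iᶜ.card = k)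
    (τ : Equiv.Perm (Fin n)) (ρ : Equiv.Perm (Fin k)) :
    Finset.image (fun i : Fin n => shufflePerm I hI hJ τ ρ (Fin.castAdd k i)) Finset.univ = I := by
  apply Finset.eq_of_subset_of_card_le
  · intro x hx
    simp only [Finset.mem_image] at hx
    obtain ⟨i, _, rfl⟩ := hx
    show shuffleFun I hI hJ τ ρ _ ∈ I
    rw [shuffleFun_castAdd]
    exact I.orderEmbOfFin_mem hI _
  · rw [hI, Finset.card_image_of_injective _ (fun a b h => by
      exact Fin.castAdd_injective n k ((shufflePerm I hI hJ τ ρ).injective h))]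
    simp

lemma shufflePerm_inj {n k : ℕ} (I I' : Finset (Fin (n+k))) (hI : I.card = n) (hJ : Iᶜ.card = k)
    (hI' : I'.card = n) (hJ' : I'ᶜ.card = k)
    (τ τ' : Equiv.Perm (Fin n)) (ρ ρ' : Equiv.Perm (Fin k))
    (h : shufflePerm I hI hJ τ ρ = shufflePerm I' hI' hJ' τ' ρ') :
    I = I' ∧ τ = τ' ∧ ρ = ρ' := by
  have hII : I = I' := by
    rw [← shufflePerm_image I hI hJ τ ρ, ← shufflePerm_image I' hI' hJ' τ' ρ', h]
  subst hII
  refine ⟨rfl, ?_, ?_⟩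
  · apply Equiv.ext; intro i
    have h2 := DFunLike.congr_fun h (Fin.castAdd k i)
    simp only [shufflePerm, Equiv.ofBijective_apply, shuffleFun_castAdd] at h2
    exact (I.orderEmbOfFin hI).injective h2
  · apply Equiv.ext; intro j
    have h2 := DFunLike.congr_fun h (Fin.natAdd n j)
    simp only [shufflePerm, Equiv.ofBijective_apply, shuffleFun_natAdd] at h2
    exact (Iᶜ.orderEmbOfFin hJ).injective h2


open MvPolynomial in
/-- Proposition 4.5: for partitions `λ` of length `n` and `μ` of length `k`,
`∑_I M_λ(x_I) M_μ(x_J) = M_{(λ,μ)_≤}(x_1,…,x_{n+k})`, the sum being over all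
`n`-element subsets `I` of `{1,…,n+k}` with complement `J`. -/
theorem shuffle_Msym {n k : ℕ} (lam : Fin n → ℕ) (mu : Fin k → ℕ)
    (hlam : Monotone lam) (hmu : Monotone mu) :
    (∑ I ∈ ((Finset.univ : Finset (Fin (n + k))).powersetCard n).attach,
      have hI : I.1.card = n := (Finset.mem_powersetCard.mp I.2).2
      have hJ : I.1ᶜ.card = k := by
        have h := Finset.card_compl I.1
        rw [hI] at h
        simp only [Fintype.card_fin] at h
        omega
      rename (⇑(I.1.orderEmbOfFin hI)) (Msym lam) * rename (⇑(I.1ᶜ.orderEmbOfFin hJ)) (Msym mu))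
      = Msym (Fin.append lam mu ∘ Tuple.sort (Fin.append lam mu)) := by
  classical
  rw [Msym_comp_perm]
  set s := ((Finset.univ : Finset (Fin (n + k))).powersetCard n) with hs
  have hIc : ∀ I : {x // x ∈ s}, I.1.card = n := fun I => (Finset.mem_powersetCard.mp I.2).2
  have hJc : ∀ I : {x // x ∈ s}, I.1ᶜ.card = k := by
    intro I
    have h := Finset.card_compl I.1
    rw [hIc I] at h
    simp only [Fintype.card_fin] at h
    omega
  have step : (∑ I ∈ s.attach,
      have hI : I.1.card = n := (Finset.mem_powersetCard.mp I.2).2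
      have hJ : I.1ᶜ.card = k := by
        have h := Finset.card_compl I.1
        rw [hI] at h
        simp only [Fintype.card_fin] at h
        omega
      rename (⇑(I.1.orderEmbOfFin hI)) (Msym lam) * rename (⇑(I.1ᶜ.orderEmbOfFin hJ)) (Msym mu))
      = ∑ a : {x // x ∈ s} × Equiv.Perm (Fin n) × Equiv.Perm (Fin k),
          ∏ q : Fin (n+k), X (shufflePerm a.1.1 (hIc a.1) (hJc a.1) a.2.1 a.2.2 q)
            ^ Fin.append lam mu q := by
    rw [Fintype.sum_prod_type, ← Finset.univ_eq_attach]
    refine Finset.sum_congr rfl fun I _ => ?_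
    show rename (⇑(I.1.orderEmbOfFin (hIc I))) (Msym lam)
        * rename (⇑(I.1ᶜ.orderEmbOfFin (hJc I))) (Msym mu) = _
    rw [Fintype.sum_prod_type]
    unfold Msym
    rw [map_sum, map_sum, Finset.sum_mul_sum]
    refine Finset.sum_congr rfl fun τ _ => Finset.sum_congr rfl fun ρ _ => ?_
    rw [map_prod, map_prod]
    simp only [map_pow, rename_X]
    rw [Fin.prod_univ_add]
    congr 1
    · refine Finset.prod_congr rfl fun i _ => ?_
      simp only [shufflePerm, Equiv.ofBijective_apply, shuffleFun_castAdd, Fin.append_left]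
    · refine Finset.prod_congr rfl fun j _ => ?_
      simp only [shufflePerm, Equiv.ofBijective_apply, shuffleFun_natAdd, Fin.append_right]
  rw [step]
  unfold Msym
  refine Fintype.sum_bijective
    (fun a : {x // x ∈ s} × Equiv.Perm (Fin n) × Equiv.Perm (Fin k) =>
      shufflePerm a.1.1 (hIc a.1) (hJc a.1) a.2.1 a.2.2) ?_ _ _ fun a => ?_
  · rw [Fintype.bijective_iff_injective_and_card]
    constructor
    · rintro ⟨⟨I, hIs⟩, τ, ρ⟩ ⟨⟨I', hIs'⟩, τ', ρ'⟩ h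
      obtain ⟨h1, h2, h3⟩ := shufflePerm_inj I I' _ _ _ _ τ τ' ρ ρ' h
      subst h1; subst h2; subst h3; rfl
    · rw [Fintype.card_prod, Fintype.card_prod, Fintype.card_coe, Fintype.card_perm,
        Fintype.card_perm, Fintype.card_perm, Fintype.card_fin, Fintype.card_fin,
        Fintype.card_fin, hs, Finset.card_powersetCard, Finset.card_univ, Fintype.card_fin]
      have h := Nat.choose_mul_factorial_mul_factorial (Nat.le_add_right n k)
      rw [Nat.add_sub_cancel_left] at h
      rw [← h]; ring
  · refine Finset.prod_congr rfl fun q _ => rfl
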